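/- If the stack-depth distribution s is non-increasing (s(j) ≥ s(j+1) for all j), then LRU is an optimal eviction policy for every finite horizon τ ≥ 1 and any initial buffer content; moreover, for every critical pair y ≤_c z of states, the optimal expected miss counts satisfy J*_τ(y) ≤ J*_τ(z). -/

import Mathlib

/-- `R_d(x)`: unit right cyclic shift of the prefix of length `d` of the state `x`. -/
def rotd (d : ℕ) (x : ℕ → Bool) : ℕ → Bool :=
  fun j => if j = 1 then x d else if j ≤ d then x (j - 1) else x j

/-- One LRU transition on access depth `d`: rotate; on a miss the accessed item
enters position 1 and the deepest buffered item is evicted. -/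
def lruStep (V d : ℕ) (x : ℕ → Bool) : ℕ → Bool :=
  let y := rotd d x
  if x d then y
  else fun j =>
    if j = 1 then true
    else if j = (WithBot.unbotD 0 ((Finset.Icc 2 V).filter fun i => y i = true).max) then false
    else y j

/-- State reached after a miss at depth `d` when the (buffered) item at post-rotation
depth `j` is evicted. -/
def evictState (d j : ℕ) (x : ℕ → Bool) : ℕ → Bool :=
  fun i => if i = 1 then true else if i = j then false else rotd d x i

/-- Optimal expected number of misses over horizon `τ` from state `x`
(stack depths i.i.d. with distribution `s`; cost 1 on a miss; upon a miss any
buffered item may be evicted). -/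
noncomputable def Jopt (V : ℕ) (s : ℕ → ℝ) : ℕ → (ℕ → Bool) → ℝ
  | 0, _ => 0
  | τ + 1, x => ∑ d ∈ Finset.Icc 1 V, s d *
      (if x d then Jopt V s τ (rotd d x)
       else 1 + sInf {c : ℝ | ∃ j, 2 ≤ j ∧ j ≤ V ∧ rotd d x j = true ∧
          c = Jopt V s τ (evictState d j x)})

/-- Expected number of misses over horizon `τ` from state `x` under the LRU policy. -/
noncomputable def Jlru (V : ℕ) (s : ℕ → ℝ) : ℕ → (ℕ → Bool) → ℝ
  | 0, _ => 0
  | τ + 1, x => ∑ d ∈ Finset.Icc 1 V, s d *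
      ((if x d then 0 else 1) + Jlru V s τ (lruStep V d x))

/-- Critical pair `y <_c z`. -/
def CritPair (V : ℕ) (y z : ℕ → Bool) : Prop :=
  ∃ p q, 2 ≤ p ∧ p < q ∧ q ≤ V ∧
    y 1 = true ∧ z 1 = true ∧
    y p = true ∧ y q = false ∧ z p = false ∧ z q = true ∧
    (∀ r, r ≠ p → r ≠ q → y r = z r) ∧
    (∀ r, q < r → y r = false)

/-!
Induction on the horizon, proving that `J*_τ` is monotone along critical pairs. Monotonicity at
horizon `τ` says that, among the eviction candidates after a miss, the deepest buffered item gives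
the smallest continuation cost, which is exactly LRU's choice; so LRU attains `J*_{τ+1}`.
For monotonicity at `τ + 1`, couple the two states on the same access depth: away from the two
distinguished depths the successor states form a critical pair again, while the accesses at the
shallower depth `p` and the deeper depth `q` are compared jointly, and `s q ≤ s p` pays for it.
-/

open Finset

structure CritPairAt (V p q : ℕ) (y z : ℕ → Bool) : Prop where
  two_le : 2 ≤ p
  lt : p < q
  le : q ≤ V
  y_p : y p = true
  y_q : y q = false
  z_p : z p = false
  z_q : z q = true
  eq_of_ne : ∀ r, r ≠ p → r ≠ q → y r = z r
  y_tail : ∀ r, q < r → y r = false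

structure IsDeepest (V m : ℕ) (u : ℕ → Bool) : Prop where
  two_le : 2 ≤ m
  le : m ≤ V
  buffered : u m = true
  tail : ∀ r, m < r → u r = false

section States

variable {V p q d j : ℕ} {x y z : ℕ → Bool}

/-- The position whose content `rotd d` moves to position `j`. -/
def rotSrc (d j : ℕ) : ℕ := if j = 1 then d else if j ≤ d then j - 1 else j

lemma rotd_eq_comp (d : ℕ) (x : ℕ → Bool) : rotd d x = x ∘ rotSrc d := by
  funext j
  simp only [rotd, rotSrc, Function.comp_apply]
  split_ifs <;> rfl

lemma rotd_of_lt {d r : ℕ} (x : ℕ → Bool) (hd : 1 ≤ d) (h : d < r) : rotd d x r = x r := by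
  simp only [rotd]
  split_ifs <;> first | rfl | omega

lemma evictState_eq_update (d j : ℕ) (x : ℕ → Bool) :
    evictState d j x = Function.update (Function.update (rotd d x) j false) 1 true := by
  funext i
  simp only [evictState, Function.update_apply]

lemma CritPairAt.z_tail (h : CritPairAt V p q y z) (r : ℕ) (hr : q < r) : z r = false := by
  rw [← h.eq_of_ne r (by have := h.lt; omega) hr.ne']
  exact h.y_tail r hr

lemma CritPairAt.comp {p' q' : ℕ} {σ : ℕ → ℕ} (h : CritPairAt V p q y z)
    (hp' : 2 ≤ p') (hpq' : p' < q') (hq' : q' ≤ V)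
    (hσp : ∀ i, σ i = p ↔ i = p') (hσq : ∀ i, σ i = q ↔ i = q')
    (hσtail : ∀ r, q' < r → q < σ r) : CritPairAt V p' q' (y ∘ σ) (z ∘ σ) where
  two_le := hp'
  lt := hpq'
  le := hq'
  y_p := by simp [(hσp p').2 rfl, h.y_p]
  y_q := by simp [(hσq q').2 rfl, h.y_q]
  z_p := by simp [(hσp p').2 rfl, h.z_p]
  z_q := by simp [(hσq q').2 rfl, h.z_q]
  eq_of_ne r hrp hrq := h.eq_of_ne _ (mt (hσp r).1 hrp) (mt (hσq r).1 hrq)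
  y_tail r hr := h.y_tail _ (hσtail r hr)

lemma CritPairAt.rotate (h : CritPairAt V p q y z) (hd : 1 ≤ d) (hdV : d ≤ V)
    (hdp : d ≠ p) (hdq : d ≠ q) :
    CritPairAt V (if p < d then p + 1 else p) (if q < d then q + 1 else q)
      (rotd d y) (rotd d z) := by
  have := h.two_le
  have := h.lt
  have := h.le
  rw [rotd_eq_comp, rotd_eq_comp]
  exact h.comp (by split_ifs <;> omega) (by split_ifs <;> omega) (by split_ifs <;> omega)
    (fun i => by simp only [rotSrc]; split_ifs <;> omega)
    (fun i => by simp only [rotSrc]; split_ifs <;> omega)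
    (fun r hr => by simp only [rotSrc] at hr ⊢; split_ifs at hr ⊢ <;> omega)

lemma CritPairAt.update (h : CritPairAt V p q y z) {b : Bool}
    (hjp : j ≠ p) (hjq : j ≠ q) (hb : q < j → b = false) :
    CritPairAt V p q (Function.update y j b) (Function.update z j b) where
  two_le := h.two_le
  lt := h.lt
  le := h.le
  y_p := by rw [Function.update_of_ne hjp.symm]; exact h.y_p
  y_q := by rw [Function.update_of_ne hjq.symm]; exact h.y_q
  z_p := by rw [Function.update_of_ne hjp.symm]; exact h.z_p
  z_q := by rw [Function.update_of_ne hjq.symm]; exact h.z_q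
  eq_of_ne r hrp hrq := by
    rcases eq_or_ne r j with rfl | hrj
    · simp
    · simp only [Function.update_of_ne hrj]; exact h.eq_of_ne r hrp hrq
  y_tail r hr := by
    rcases eq_or_ne r j with rfl | hrj
    · simpa using hb hr
    · rw [Function.update_of_ne hrj]; exact h.y_tail r hr

lemma CritPairAt.evict (h : CritPairAt V p q (rotd d y) (rotd d z)) (hjp : j ≠ p) (hjq : j ≠ q) :
    CritPairAt V p q (evictState d j y) (evictState d j z) := by
  have := h.two_le
  have := h.lt
  rw [evictState_eq_update, evictState_eq_update]
  exact (h.update hjp hjq fun _ => rfl).update (by omega) (by omega) (by omega)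

lemma CritPairAt.evictState_eq (h : CritPairAt V p q (rotd d y) (rotd d z)) :
    evictState d p y = evictState d q z := by
  funext i
  have := h.eq_of_ne i
  have := h.y_q
  have := h.z_p
  simp only [evictState]
  split_ifs <;> simp_all

lemma CritPairAt.rotd_eq_evictState (h : CritPairAt V p q y z) :
    rotd p y = evictState p q z := by
  funext i
  have := h.two_le
  have := h.lt
  have := h.y_p
  have := h.y_q
  simp only [evictState, rotd]
  split_ifs <;> first | rfl | omega | (apply h.eq_of_ne <;> omega) | simp_all

lemma CritPairAt.evictState_eq_rotd (h : CritPairAt V p q y z) :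
    evictState q (p + 1) y = rotd q z := by
  funext i
  have := h.two_le
  have := h.lt
  have := h.z_q
  have := h.z_p
  simp only [evictState, rotd]
  split_ifs <;> first | rfl | omega | (apply h.eq_of_ne <;> omega) | simp_all

lemma IsDeepest.critPairAt_evict {m : ℕ} (hm : IsDeepest V m (rotd d x)) (hj : 2 ≤ j)
    (hjt : rotd d x j = true) (hjm : j ≠ m) :
    CritPairAt V j m (evictState d m x) (evictState d j x) := by
  have hjm' : j < m := by
    by_contra! h
    simp [hm.tail j (by omega)] at hjt
  have := hm.two_le
  refine ⟨hj, hjm', hm.le, ?_, ?_, ?_, ?_, fun r hrj hrm => ?_, fun r hr => ?_⟩ <;>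
    simp only [evictState] <;> split_ifs <;> first | rfl | omega | simp_all [hm.buffered, hm.tail]

end States

lemma sum_le_sum_of_pair_le {ι M : Type*} [AddCommMonoid M] [PartialOrder M]
    [IsOrderedAddMonoid M] {S : Finset ι} {f g : ι → M} {a b : ι}
    (ha : a ∈ S) (hb : b ∈ S) (hab : a ≠ b) (hpair : f a + f b ≤ g a + g b)
    (hrest : ∀ i ∈ S, i ≠ a → i ≠ b → f i ≤ g i) : ∑ i ∈ S, f i ≤ ∑ i ∈ S, g i := by
  classical
  have hsub : {a, b} ⊆ S := insert_subset ha (singleton_subset_iff.2 hb)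
  rw [← sum_sdiff hsub, ← sum_sdiff (f := g) hsub, sum_pair hab, sum_pair hab]
  refine add_le_add (sum_le_sum fun i hi => ?_) hpair
  simp only [mem_sdiff, mem_insert, mem_singleton, not_or] at hi
  exact hrest i hi.1 hi.2.1 hi.2.2

section Jopt

variable {V : ℕ} {s : ℕ → ℝ} {τ d : ℕ}

def evictCosts (V : ℕ) (s : ℕ → ℝ) (τ d : ℕ) (x : ℕ → Bool) : Set ℝ :=
  {c | ∃ j, 2 ≤ j ∧ j ≤ V ∧ rotd d x j = true ∧ c = Jopt V s τ (evictState d j x)}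

/-- Optimal expected cost over the remaining `τ` steps, knowing the next access is at depth `d`. -/
noncomputable def accessCost (V : ℕ) (s : ℕ → ℝ) (τ : ℕ) (x : ℕ → Bool) (d : ℕ) : ℝ :=
  if x d then Jopt V s τ (rotd d x) else 1 + sInf (evictCosts V s τ d x)

lemma Jopt_succ (τ : ℕ) (x : ℕ → Bool) :
    Jopt V s (τ + 1) x = ∑ d ∈ Icc 1 V, s d * accessCost V s τ x d := by
  rw [Jopt]; rfl

lemma Jopt_nonneg (hs : ∀ i, 0 ≤ s i) (τ : ℕ) (x : ℕ → Bool) : 0 ≤ Jopt V s τ x := by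
  induction τ generalizing x with
  | zero => simp [Jopt]
  | succ τ ih =>
    rw [Jopt_succ]
    refine sum_nonneg fun d _ => mul_nonneg (hs d) ?_
    unfold accessCost
    split
    · exact ih _
    · have : 0 ≤ sInf (evictCosts V s τ d x) :=
        Real.sInf_nonneg (by rintro c ⟨j, -, -, -, rfl⟩; exact ih _)
      linarith

lemma sInf_evictCosts_le (hs : ∀ i, 0 ≤ s i) {x : ℕ → Bool} {j : ℕ} (hj : 2 ≤ j)
    (hjV : j ≤ V) (hjt : rotd d x j = true) :
    sInf (evictCosts V s τ d x) ≤ Jopt V s τ (evictState d j x) :=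
  csInf_le ⟨0, by rintro c ⟨j, -, -, -, rfl⟩; exact Jopt_nonneg hs τ _⟩ ⟨j, hj, hjV, hjt, rfl⟩

lemma sInf_evictCosts_eq (hs : ∀ i, 0 ≤ s i)
    (hcrit : ∀ p q y z, CritPairAt V p q y z → Jopt V s τ y ≤ Jopt V s τ z)
    {x : ℕ → Bool} {m : ℕ} (hm : IsDeepest V m (rotd d x)) :
    sInf (evictCosts V s τ d x) = Jopt V s τ (evictState d m x) := by
  refine le_antisymm (sInf_evictCosts_le hs hm.two_le hm.le hm.buffered) ?_
  refine le_csInf ⟨_, m, hm.two_le, hm.le, hm.buffered, rfl⟩ ?_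
  rintro c ⟨j, hj, -, hjt, rfl⟩
  rcases eq_or_ne j m with rfl | hjm
  · rfl
  · exact hcrit _ _ _ _ (hm.critPairAt_evict hj hjt hjm)

end Jopt

section Critical

variable {V : ℕ} {s : ℕ → ℝ} {τ p q : ℕ} {y z : ℕ → Bool}

/-- After a common miss, `y` copies every eviction of `z`, except that `z` evicting at `q'` is
answered by `y` evicting at `p'`, which leads to the same state. -/
lemma accessCost_le_of_ne (hs : ∀ i, 0 ≤ s i)
    (ih : ∀ p q y z, CritPairAt V p q y z → Jopt V s τ y ≤ Jopt V s τ z)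
    (h : CritPairAt V p q y z) {d : ℕ} (hd : 1 ≤ d) (hdV : d ≤ V) (hdp : d ≠ p) (hdq : d ≠ q) :
    accessCost V s τ y d ≤ accessCost V s τ z d := by
  obtain ⟨p', q', h'⟩ : ∃ p' q', CritPairAt V p' q' (rotd d y) (rotd d z) :=
    ⟨_, _, h.rotate hd hdV hdp hdq⟩
  have := h'.two_le
  have := h'.lt
  unfold accessCost
  rw [h.eq_of_ne d hdp hdq]
  cases z d
  · simp only [Bool.false_eq_true, if_false, add_le_add_iff_left]
    refine le_csInf ⟨_, q', by omega, h'.le, h'.z_q, rfl⟩ ?_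
    rintro c ⟨j, hj, hjV, hjt, rfl⟩
    rcases eq_or_ne j q' with rfl | hjq
    · rw [← h'.evictState_eq]
      exact sInf_evictCosts_le hs h'.two_le (by omega) h'.y_p
    · have hjp : j ≠ p' := by
        rintro rfl
        simp [h'.z_p] at hjt
      calc sInf (evictCosts V s τ d y) ≤ Jopt V s τ (evictState d j y) :=
            sInf_evictCosts_le hs hj hjV (by rw [h'.eq_of_ne j hjp hjq]; exact hjt)
        _ ≤ Jopt V s τ (evictState d j z) := ih _ _ _ _ (h'.evict hjp hjq)
  · exact ih _ _ _ _ h'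

/-- On an access at `p`, `y` hits and lands exactly where `z` lands after its miss; on an access
at `q`, `y` misses but can land where `z` lands after its hit. Hence `y` pays one extra miss
with probability `s q` and saves one with probability `s p ≥ s q`. -/
lemma accessCost_pair_le (hs : ∀ i, 0 ≤ s i)
    (ih : ∀ p q y z, CritPairAt V p q y z → Jopt V s τ y ≤ Jopt V s τ z)
    (h : CritPairAt V p q y z) (hsq : s q ≤ s p) :
    s p * accessCost V s τ y p + s q * accessCost V s τ y q ≤
      s p * accessCost V s τ z p + s q * accessCost V s τ z q := by
  have := h.two_le
  have := h.lt
  have hdeep : IsDeepest V q (rotd p z) :=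
    ⟨by omega, h.le, by rw [rotd_of_lt z (by omega) h.lt, h.z_q],
      fun r hr => by rw [rotd_of_lt z (by omega) (h.lt.trans hr), h.z_tail r hr]⟩
  have hp : accessCost V s τ z p = 1 + accessCost V s τ y p := by
    simp only [accessCost, h.y_p, h.z_p, Bool.false_eq_true, if_true, if_false,
      sInf_evictCosts_eq hs ih hdeep, h.rotd_eq_evictState]
  have hq : accessCost V s τ y q ≤ 1 + accessCost V s τ z q := by
    simp only [accessCost, h.y_q, h.z_q, Bool.false_eq_true, if_true, if_false,
      add_le_add_iff_left, ← h.evictState_eq_rotd]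
    refine sInf_evictCosts_le hs (by omega) (by have := h.le; omega) ?_
    rw [rotd, if_neg (by omega), if_pos (by omega), Nat.add_sub_cancel, h.y_p]
  have hq' := mul_le_mul_of_nonneg_left hq (hs q)
  rw [hp]
  linarith

theorem Jopt_le_of_critPairAt (hs : ∀ i, 0 ≤ s i) (hanti : AntitoneOn s (Set.Icc 1 V)) (τ : ℕ) :
    ∀ p q y z, CritPairAt V p q y z → Jopt V s τ y ≤ Jopt V s τ z := by
  induction τ with
  | zero => intros; simp [Jopt]
  | succ τ ih =>
    intro p q y z h
    have := h.two_le
    have := h.lt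
    have := h.le
    rw [Jopt_succ, Jopt_succ]
    refine sum_le_sum_of_pair_le (a := p) (b := q)
      (mem_Icc.2 ⟨by omega, by omega⟩) (mem_Icc.2 ⟨by omega, h.le⟩) h.lt.ne
      (accessCost_pair_le hs ih h (hanti ⟨by omega, by omega⟩ ⟨by omega, h.le⟩ h.lt.le))
      fun d hd hdp hdq => ?_
    rw [mem_Icc] at hd
    exact mul_le_mul_of_nonneg_left (accessCost_le_of_ne hs ih h hd.1 hd.2 hdp hdq) (hs d)

end Critical

section LRU

variable {V : ℕ} {s : ℕ → ℝ} {d : ℕ} {x : ℕ → Bool}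

lemma rotd_supported (hsupp : ∀ j, x j = true → 1 ≤ j ∧ j ≤ V) (hd : 1 ≤ d) (hdV : d ≤ V) :
    ∀ j, rotd d x j = true → 1 ≤ j ∧ j ≤ V := by
  intro j hj
  rw [rotd_eq_comp] at hj
  have := hsupp _ hj
  simp only [rotSrc] at this
  split_ifs at this <;> omega

lemma evictState_supported (hsupp : ∀ j, x j = true → 1 ≤ j ∧ j ≤ V) (hd : 1 ≤ d)
    (hdV : d ≤ V) (m : ℕ) : ∀ i, evictState d m x i = true → 1 ≤ i ∧ i ≤ V := by
  intro i hi
  simp only [evictState] at hi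
  split_ifs at hi
  · omega
  · exact rotd_supported hsupp hd hdV i hi

lemma lruStep_of_hit (hxd : x d = true) : lruStep V d x = rotd d x := by
  simp [lruStep, hxd]

lemma lruStep_of_miss {m : ℕ} (hxd : x d = false)
    (hm : ((Icc 2 V).filter fun i => rotd d x i = true).max = (m : WithBot ℕ)) :
    lruStep V d x = evictState d m x := by
  funext j
  simp only [lruStep, evictState, hxd, hm, Bool.false_eq_true, if_false]
  rfl

lemma exists_max_isDeepest (hx1 : x 1 = true) (hsupp : ∀ j, x j = true → 1 ≤ j ∧ j ≤ V)
    (hd : 2 ≤ d) (hdV : d ≤ V) :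
    ∃ m : ℕ, ((Icc 2 V).filter fun i => rotd d x i = true).max = (m : WithBot ℕ) ∧
      IsDeepest V m (rotd d x) := by
  have h2 : rotd d x 2 = true := by rw [rotd, if_neg (by omega), if_pos hd]; exact hx1
  have h2mem : 2 ∈ (Icc 2 V).filter fun i => rotd d x i = true :=
    mem_filter.2 ⟨mem_Icc.2 ⟨le_rfl, by omega⟩, h2⟩
  obtain ⟨m, hm⟩ := max_of_nonempty ⟨2, h2mem⟩
  obtain ⟨hmIcc, hmt⟩ := mem_filter.1 (mem_of_max hm)
  rw [mem_Icc] at hmIcc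
  refine ⟨m, hm, hmIcc.1, hmIcc.2, hmt, fun r hr => ?_⟩
  by_contra hrt
  rw [Bool.not_eq_false] at hrt
  have hrV := (rotd_supported hsupp (by omega) hdV r hrt).2
  have := le_max_of_eq (mem_filter.2 ⟨mem_Icc.2 ⟨by omega, hrV⟩, hrt⟩) hm
  omega

theorem Jlru_eq_Jopt (hs : ∀ i, 0 ≤ s i)
    (hcrit : ∀ τ p q y z, CritPairAt V p q y z → Jopt V s τ y ≤ Jopt V s τ z) (τ : ℕ) :
    ∀ x : ℕ → Bool, x 1 = true → (∀ j, x j = true → 1 ≤ j ∧ j ≤ V) →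
      Jlru V s τ x = Jopt V s τ x := by
  induction τ with
  | zero => intros; simp [Jlru, Jopt]
  | succ τ ih =>
    intro x hx1 hsupp
    rw [Jlru, Jopt_succ]
    refine sum_congr rfl fun d hd => ?_
    rw [mem_Icc] at hd
    congr 1
    unfold accessCost
    cases hxd : x d
    · have hd2 : 2 ≤ d := by
        by_contra
        simp [show d = 1 by omega, hx1] at hxd
      obtain ⟨m, hmax, hm⟩ := exists_max_isDeepest hx1 hsupp hd2 hd.2
      rw [lruStep_of_miss hxd hmax, sInf_evictCosts_eq hs (hcrit τ) hm,
        ih _ (by simp [evictState]) (evictState_supported hsupp hd.1 hd.2 m)]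
      simp
    · rw [lruStep_of_hit hxd,
        ih _ (by rw [rotd, if_pos rfl, hxd]) (rotd_supported hsupp hd.1 hd.2)]
      simp

end LRU

theorem stmt14_general (V : ℕ) (s : ℕ → ℝ) (hs : ∀ i, 0 ≤ s i)
    (hmono : ∀ j, 1 ≤ j → j < V → s (j + 1) ≤ s j) :
    (∀ τ, 1 ≤ τ → ∀ x : ℕ → Bool, x 1 = true →
      (∀ j, x j = true → 1 ≤ j ∧ j ≤ V) → Jlru V s τ x = Jopt V s τ x)
    ∧ (∀ τ (y z : ℕ → Bool), CritPair V y z → Jopt V s τ y ≤ Jopt V s τ z) := by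
  have hanti : AntitoneOn s (Set.Icc 1 V) :=
    antitoneOn_of_add_one_le Set.ordConnected_Icc fun j _ hj hj1 => hmono j hj.1 (by
      have := hj1.2; omega)
  have hcrit := Jopt_le_of_critPairAt hs hanti
  refine ⟨fun τ _ => Jlru_eq_Jopt hs hcrit τ, ?_⟩
  rintro τ y z ⟨p, q, hp, hpq, hqV, -, -, hyp, hyq, hzp, hzq, hyz, htail⟩
  exact hcrit τ p q y z ⟨hp, hpq, hqV, hyp, hyq, hzp, hzq, hyz, htail⟩

/-- If the stack-depth distribution `s` is non-increasing, then LRU is optimal for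
every finite horizon `τ ≥ 1` and every initial buffer content; moreover for every
critical pair `y ≤_c z` the optimal costs satisfy `J*_τ(y) ≤ J*_τ(z)`. -/
theorem stmt14 (V : ℕ) (s : ℕ → ℝ) (hs : ∀ i, 0 ≤ s i)
    (hsum : ∑ j ∈ Finset.Icc 1 V, s j = 1)
    (hmono : ∀ j, 1 ≤ j → j < V → s (j + 1) ≤ s j) :
    (∀ τ, 1 ≤ τ → ∀ x : ℕ → Bool, x 1 = true →
      (∀ j, x j = true → 1 ≤ j ∧ j ≤ V) → Jlru V s τ x = Jopt V s τ x)
    ∧ (∀ τ (y z : ℕ → Bool), CritPair V y z → Jopt V s τ y ≤ Jopt V s τ z) :=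
  stmt14_general V s hs hmono
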